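/- Let (T,d,ρ) be a compact rooted real tree and a ∈ (0,∞). For any σ ∈ T(a) and r ∈ (0,2a), the diameter of the T(a)-ball Γ(σ,r) = B(σ,r) ∩ T(a) is strictly less than r, and for every r' with diam(Γ(σ,r)) < r' < r one has Γ(σ,r') = Γ(σ,r). -/

import Mathlib

/-- A (rooted) real tree structure on a metric space `T`, given by the assignment
`seg x y` of the unique geodesic arc joining `x` to `y`:
(i) there is an isometric parametrization of `seg x y` by `[0, dist x y]` with the
correct endpoints; (ii) any continuous injective arc from `x` to `y` has image `seg x y`. -/
structure IsRealTree {T : Type*} [MetricSpace T] (seg : T → T → Set T) : Prop where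
  geodesic : ∀ x y : T, ∃ f : ℝ → T, f 0 = x ∧ f (dist x y) = y ∧
    (∀ s ∈ Set.Icc (0:ℝ) (dist x y), ∀ t ∈ Set.Icc (0:ℝ) (dist x y),
      dist (f s) (f t) = |s - t|) ∧ seg x y = f '' Set.Icc 0 (dist x y)
  unique_arc : ∀ x y : T, ∀ q : ℝ → T, ContinuousOn q (Set.Icc 0 1) →
    Set.InjOn q (Set.Icc 0 1) → q 0 = x → q 1 = y →
    q '' Set.Icc 0 1 = seg x y

/-!
Geodesics from the root to `x` and to `y` agree exactly up to the Gromov product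
`(x|y) = (d(ρ,x) + d(ρ,y) - d(x,y)) / 2`: beyond their last common point the two geodesics
concatenate to an injective arc from `x` to `y`, which must be the segment `[x,y]`. On the
sphere `T(a)` this gives `d(x,z) ≤ 2 (a - min ((x|y), (y|z))) = max (d(x,y), d(y,z))`, so
`T(a)` is ultrametric. Open balls of an ultrametric space are closed, hence `Γ(σ,r)` is compact
and its diameter is the distance between two of its points, which is `< r` by the ultrametric
inequality through `σ`.
-/

open Set Metric

theorem IsUltrametricDist.diam_ball_lt {X : Type*} [PseudoMetricSpace X] [IsUltrametricDist X]
    [CompactSpace X] (x : X) {r : ℝ} (hr : 0 < r) : diam (ball x r) < r := by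
  have hK : IsCompact (ball x r) := (isClosed_ball x r).isCompact
  obtain ⟨p, hp, hmax⟩ := (hK.prod hK).exists_isMaxOn
    ⟨(x, x), mem_ball_self hr, mem_ball_self hr⟩ continuous_dist.continuousOn
  calc diam (ball x r) ≤ dist p.1 p.2 :=
        diam_le_of_forall_dist_le dist_nonneg fun u hu v hv => hmax (mk_mem_prod hu hv)
    _ ≤ max (dist p.1 x) (dist x p.2) := dist_triangle_max _ _ _
    _ < r := max_lt (mem_ball.1 hp.1) (mem_ball'.1 hp.2)

section RealTree

variable {T : Type*} [MetricSpace T]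

def IsometricOn (f : ℝ → T) (s : Set ℝ) : Prop :=
  ∀ u ∈ s, ∀ v ∈ s, dist (f u) (f v) = |u - v|

namespace IsometricOn

variable {f : ℝ → T} {s : Set ℝ}

lemma mono {t : Set ℝ} (hf : IsometricOn f s) (hts : t ⊆ s) : IsometricOn f t :=
  fun u hu v hv => hf u (hts hu) v (hts hv)

lemma continuousOn (hf : IsometricOn f s) : ContinuousOn f s :=
  (LipschitzOnWith.of_dist_le_mul (K := 1) fun u hu v hv => by
    rw [hf u hu v hv, NNReal.coe_one, one_mul, Real.dist_eq]).continuousOn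

lemma injOn (hf : IsometricOn f s) : InjOn f s := fun u hu v hv huv => by
  have := hf u hu v hv
  rw [huv, dist_self, eq_comm, abs_eq_zero, sub_eq_zero] at this
  exact this

lemma dist_eq_sub (hf : IsometricOn f s) {u v : ℝ} (hu : u ∈ s) (hv : v ∈ s) (huv : u ≤ v) :
    dist (f u) (f v) = v - u := by
  rw [hf u hu v hv, abs_sub_comm, abs_of_nonneg (sub_nonneg.2 huv)]

lemma injOn_union {t : Set ℝ} (hs : IsometricOn f s) (ht : IsometricOn f t)
    (hcross : ∀ u ∈ s, ∀ v ∈ t, f u = f v → u = v) : InjOn f (s ∪ t) := by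
  rintro u (hu | hu) v (hv | hv) huv
  · exact hs.injOn hu hv huv
  · exact hcross u hu v hv huv
  · exact (hcross v hv u hu huv.symm).symm
  · exact ht.injOn hu hv huv

lemma eq_of_apply_eq {g : ℝ → T} {A B u v : ℝ} (hf : IsometricOn f (Icc 0 A))
    (hg : IsometricOn g (Icc 0 B)) (h0 : f 0 = g 0) (hu : u ∈ Icc 0 A) (hv : v ∈ Icc 0 B)
    (huv : f u = g v) : u = v := by
  rw [← sub_zero u, ← sub_zero v, ← hf.dist_eq_sub ⟨le_rfl, hu.1.trans hu.2⟩ hu hu.1,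
    ← hg.dist_eq_sub ⟨le_rfl, hv.1.trans hv.2⟩ hv hv.1, h0, huv]

end IsometricOn

namespace IsRealTree

variable {seg : T → T → Set T}

theorem image_eq_seg (htree : IsRealTree seg) {q : ℝ → T} {α β : ℝ} (hαβ : α < β)
    (hq : ContinuousOn q (Icc α β)) (hinj : InjOn q (Icc α β)) :
    q '' Icc α β = seg (q α) (q β) := by
  set e : ℝ → ℝ := fun s => (β - α) * s + α
  have he : e '' Icc 0 1 = Icc α β := by simp [e, image_affine_Icc' (sub_pos.2 hαβ)]
  have hmaps : MapsTo e (Icc 0 1) (Icc α β) := he ▸ mapsTo_image e _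
  have heinj : InjOn e (Icc 0 1) := fun u _ v _ huv => by
    simpa [e, sub_ne_zero.2 hαβ.ne'] using huv
  have := htree.unique_arc (q α) (q β) (q ∘ e) (hq.comp (by fun_prop) hmaps)
    (hinj.comp heinj hmaps) (by simp [e]) (by simp [e])
  rwa [image_comp, he] at this

theorem exists_isometricOn (htree : IsRealTree seg) (x y : T) :
    ∃ f : ℝ → T, f 0 = x ∧ f (dist x y) = y ∧ IsometricOn f (Icc 0 (dist x y)) :=
  let ⟨f, hf0, hf1, hf, _⟩ := htree.geodesic x y
  ⟨f, hf0, hf1, hf⟩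

theorem dist_add_dist_of_mem_seg (htree : IsRealTree seg) {x y p : T} (hp : p ∈ seg x y) :
    dist x p + dist p y = dist x y := by
  obtain ⟨w, rfl, hwy, hw, hseg⟩ := htree.geodesic x y
  have hw' : IsometricOn w (Icc 0 (dist (w 0) y)) := hw
  rw [hseg] at hp
  obtain ⟨s, hs, rfl⟩ := hp
  have hd : dist (w 0) y ∈ Icc 0 (dist (w 0) y) := ⟨dist_nonneg, le_rfl⟩
  conv_lhs => rw [← hwy]
  rw [hw'.dist_eq_sub ⟨le_rfl, hd.1⟩ hs hs.1, hw'.dist_eq_sub hs hd hs.2]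
  ring

theorem dist_add_dist_of_arc (htree : IsRealTree seg) {q : ℝ → T} {α β t : ℝ} (hαβ : α ≤ β)
    (hq : ContinuousOn q (Icc α β)) (hinj : InjOn q (Icc α β)) (ht : t ∈ Icc α β) :
    dist (q α) (q t) + dist (q t) (q β) = dist (q α) (q β) := by
  rcases hαβ.eq_or_lt with rfl | hαβ
  · obtain rfl : t = α := le_antisymm ht.2 ht.1
    simp
  refine htree.dist_add_dist_of_mem_seg ?_
  rw [← htree.image_eq_seg hαβ hq hinj]
  exact mem_image_of_mem q ht

theorem eqOn_of_isometricOn (htree : IsRealTree seg) {f g : ℝ → T} {L : ℝ}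
    (hf : IsometricOn f (Icc 0 L)) (hg : IsometricOn g (Icc 0 L)) (h0 : f 0 = g 0)
    (hL : f L = g L) : EqOn f g (Icc 0 L) := by
  intro t ht
  rcases (ht.1.trans ht.2).eq_or_lt with rfl | hL0
  · rwa [le_antisymm ht.2 ht.1]
  have hmem : f t ∈ g '' Icc 0 L := by
    rw [htree.image_eq_seg hL0 hg.continuousOn hg.injOn, ← h0, ← hL,
      ← htree.image_eq_seg hL0 hf.continuousOn hf.injOn]
    exact mem_image_of_mem f ht
  obtain ⟨s, hs, hst⟩ := hmem
  rw [← hst, hg.eq_of_apply_eq hf h0.symm hs ht hst]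

theorem dist_eq_of_last_common (htree : IsRealTree seg) {f g : ℝ → T} {A B c : ℝ}
    (hf : IsometricOn f (Icc 0 A)) (hg : IsometricOn g (Icc 0 B)) (h0 : f 0 = g 0)
    (hc0 : 0 ≤ c) (hcA : c ≤ A) (hcB : c ≤ B) (hfgc : f c = g c)
    (hne : ∀ u, c < u → u ≤ A → u ≤ B → f u ≠ g u) :
    dist (f A) (g B) = A - c + (B - c) := by
  set q : ℝ → T := fun t => if t < 0 then f (c - t) else g (c + t)
  have hmemf : ∀ t ∈ Icc (c - A) 0, c - t ∈ Icc 0 A := fun t ht =>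
    ⟨by linarith [ht.2], by linarith [ht.1]⟩
  have hmemg : ∀ t ∈ Icc 0 (B - c), c + t ∈ Icc 0 B := fun t ht =>
    ⟨by linarith [ht.1], by linarith [ht.2]⟩
  have hqf : ∀ t ∈ Icc (c - A) 0, q t = f (c - t) := by
    intro t ht
    rcases ht.2.lt_or_eq with h | rfl
    · simp [q, h]
    · simp [q, hfgc]
  have hqg : ∀ t ∈ Icc 0 (B - c), q t = g (c + t) := fun t ht => by
    simp [q, not_lt.2 ht.1]
  have hleft : IsometricOn q (Icc (c - A) 0) := by
    intro u hu v hv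
    rw [hqf u hu, hqf v hv, hf _ (hmemf u hu) _ (hmemf v hv), abs_sub_comm]
    ring_nf
  have hright : IsometricOn q (Icc 0 (B - c)) := by
    intro u hu v hv
    rw [hqg u hu, hqg v hv, hg _ (hmemg u hu) _ (hmemg v hv)]
    ring_nf
  have hI : Icc (c - A) 0 ∪ Icc 0 (B - c) = Icc (c - A) (B - c) :=
    Icc_union_Icc_eq_Icc (by linarith) (by linarith)
  have hcont : ContinuousOn q (Icc (c - A) (B - c)) :=
    hI ▸ hleft.continuousOn.union_of_isClosed hright.continuousOn isClosed_Icc isClosed_Icc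
  -- the two branches of `q` only meet at the junction, by comparing distances to the root
  have hinj : InjOn q (Icc (c - A) (B - c)) :=
    hI ▸ hleft.injOn_union hright fun s hs t ht hst => by
      rw [hqf s hs, hqg t ht] at hst
      have hts : c - s = c + t := hf.eq_of_apply_eq hg h0 (hmemf s hs) (hmemg t ht) hst
      rcases ht.1.eq_or_lt with rfl | htpos
      · linarith
      · exact absurd (hts ▸ hst) (hne _ (by linarith) (hts ▸ (hmemf s hs).2) (hmemg t ht).2)
  have key := htree.dist_add_dist_of_arc (by linarith) hcont hinj (t := 0)
    ⟨by linarith, by linarith⟩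
  rw [hqf _ ⟨le_rfl, by linarith⟩, hqg _ ⟨by linarith, le_rfl⟩, hqg 0 ⟨le_rfl, by linarith⟩]
    at key
  simp only [sub_sub_cancel, add_sub_cancel, add_zero] at key
  rw [← key, ← hfgc, dist_comm, hf.dist_eq_sub ⟨hc0, hcA⟩ ⟨hc0.trans hcA, le_rfl⟩ hcA, hfgc,
    hg.dist_eq_sub ⟨hc0, hcB⟩ ⟨hc0.trans hcB, le_rfl⟩ hcB]

theorem eqOn_Icc_gromov (htree : IsRealTree seg) {f g : ℝ → T} {A B : ℝ} (hA : 0 ≤ A)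
    (hB : 0 ≤ B) (hf : IsometricOn f (Icc 0 A)) (hg : IsometricOn g (Icc 0 B)) (h0 : f 0 = g 0) :
    EqOn f g (Icc 0 ((A + B - dist (f A) (g B)) / 2)) := by
  set S := {t ∈ Icc 0 (min A B) | f t = g t}
  have hS : IsCompact S := isCompact_Icc.of_isClosed_subset
    (isClosed_Icc.isClosed_eq (hf.continuousOn.mono (Icc_subset_Icc_right (min_le_left A B)))
      (hg.continuousOn.mono (Icc_subset_Icc_right (min_le_right A B)))) (sep_subset _ _)
  have hcS : sSup S ∈ S := hS.sSup_mem ⟨0, ⟨le_rfl, le_min hA hB⟩, h0⟩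
  set c := sSup S
  have hcA : c ≤ A := hcS.1.2.trans (min_le_left A B)
  have hcB : c ≤ B := hcS.1.2.trans (min_le_right A B)
  have hne : ∀ u, c < u → u ≤ A → u ≤ B → f u ≠ g u := fun u hcu huA huB hfgu =>
    hcu.not_ge (le_csSup hS.bddAbove ⟨⟨hcS.1.1.trans hcu.le, le_min huA huB⟩, hfgu⟩)
  have hgromov : (A + B - dist (f A) (g B)) / 2 = c := by
    rw [htree.dist_eq_of_last_common hf hg h0 hcS.1.1 hcA hcB hcS.2 hne]
    ring
  rw [hgromov]
  exact htree.eqOn_of_isometricOn (hf.mono (Icc_subset_Icc_right hcA))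
    (hg.mono (Icc_subset_Icc_right hcB)) h0 hcS.2

theorem isUltrametricDist_sphere (htree : IsRealTree seg) (ρ : T) (a : ℝ) :
    IsUltrametricDist {τ : T // dist ρ τ = a} := by
  refine ⟨fun ⟨x, hx⟩ ⟨y, hy⟩ ⟨z, hz⟩ => ?_⟩
  simp only [Subtype.dist_eq]
  obtain ⟨f, hf0, hfx, hf⟩ := htree.exists_isometricOn ρ x
  obtain ⟨g, hg0, hgy, hg⟩ := htree.exists_isometricOn ρ y
  obtain ⟨k, hk0, hkz, hk⟩ := htree.exists_isometricOn ρ z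
  rw [hx] at hfx hf
  rw [hy] at hgy hg
  rw [hz] at hkz hk
  have ha : 0 ≤ a := hx ▸ dist_nonneg
  have hfg := htree.eqOn_Icc_gromov ha ha hf hg (hf0.trans hg0.symm)
  have hgk := htree.eqOn_Icc_gromov ha ha hg hk (hg0.trans hk0.symm)
  rw [hfx, hgy] at hfg
  rw [hgy, hkz] at hgk
  have hxy : dist x y ≤ 2 * a := by linarith [dist_triangle_left x y ρ]
  have hyz : dist y z ≤ 2 * a := by linarith [dist_triangle_left y z ρ]
  set m := min ((a + a - dist x y) / 2) ((a + a - dist y z) / 2) with hm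
  have hm0 : 0 ≤ m := le_min (by linarith) (by linarith)
  have hma : m ≤ a := (min_le_left _ _).trans (by linarith [dist_nonneg (x := x) (y := y)])
  have hfkm : f m = k m := (hfg ⟨hm0, min_le_left _ _⟩).trans (hgk ⟨hm0, min_le_right _ _⟩)
  calc dist x z ≤ dist (f m) x + dist (f m) z := dist_triangle_left x z (f m)
    _ = 2 * (a - m) := by
      rw [← hfx, hf.dist_eq_sub ⟨hm0, hma⟩ ⟨ha, le_rfl⟩ hma, hfkm, ← hkz,
        hk.dist_eq_sub ⟨hm0, hma⟩ ⟨ha, le_rfl⟩ hma]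
      ring
    _ ≤ max (dist x y) (dist y z) := by
      rcases min_choice ((a + a - dist x y) / 2) ((a + a - dist y z) / 2) with h | h <;>
        rw [hm, h] <;>
        linarith [le_max_left (dist x y) (dist y z), le_max_right (dist x y) (dist y z)]

end IsRealTree

end RealTree

theorem stmt3_general {T : Type*} [MetricSpace T] [CompactSpace T]
    (seg : T → T → Set T) (htree : IsRealTree seg) (ρ : T)
    (a : ℝ) (σ : T) (hσ : dist ρ σ = a)
    (r : ℝ) (hr : 0 < r) :
    Metric.diam (Metric.ball σ r ∩ {τ : T | dist ρ τ = a}) < r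
    ∧ ∀ r' : ℝ, Metric.diam (Metric.ball σ r ∩ {τ : T | dist ρ τ = a}) < r' →
        r' < r →
        Metric.ball σ r' ∩ {τ : T | dist ρ τ = a}
          = Metric.ball σ r ∩ {τ : T | dist ρ τ = a} := by
  have := htree.isUltrametricDist_sphere ρ a
  have : CompactSpace {τ : T // dist ρ τ = a} := isCompact_iff_compactSpace.1
    (isClosed_eq (continuous_const.dist continuous_id) continuous_const).isCompact
  have hdiam : diam (ball σ r ∩ {τ : T | dist ρ τ = a}) < r := by
    rw [← Subtype.image_ball ⟨σ, hσ⟩, isometry_subtype_coe.diam_image]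
    exact IsUltrametricDist.diam_ball_lt _ hr
  refine ⟨hdiam, fun r' hr' hr'r =>
    (inter_subset_inter_left _ (ball_subset_ball hr'r.le)).antisymm fun τ hτ => ⟨?_, hτ.2⟩⟩
  exact (dist_le_diam_of_mem isBounded_of_compactSpace hτ ⟨mem_ball_self hr, hσ⟩).trans_lt hr'

/-- In a compact rooted real tree, for `a > 0`, `σ ∈ T(a)` and
`0 < r < 2a`, the `T(a)`-ball `Γ(σ,r) = B(σ,r) ∩ T(a)` has diameter `< r`, and for
every `r'` with `diam Γ(σ,r) < r' < r` one has `Γ(σ,r') = Γ(σ,r)`. -/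
theorem stmt3 {T : Type*} [MetricSpace T] [CompactSpace T]
    (seg : T → T → Set T) (htree : IsRealTree seg) (ρ : T)
    (a : ℝ) (ha : 0 < a) (σ : T) (hσ : dist ρ σ = a)
    (r : ℝ) (hr : 0 < r) (hr2 : r < 2 * a) :
    Metric.diam (Metric.ball σ r ∩ {τ : T | dist ρ τ = a}) < r
    ∧ ∀ r' : ℝ, Metric.diam (Metric.ball σ r ∩ {τ : T | dist ρ τ = a}) < r' →
        r' < r →
        Metric.ball σ r' ∩ {τ : T | dist ρ τ = a}
          = Metric.ball σ r ∩ {τ : T | dist ρ τ = a} :=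
  stmt3_general seg htree ρ a σ hσ r hr
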